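/- arXiv:2107.09494 — 3 statements merged into one kernel-verified Lean document; each statement's English description precedes it below -/
import Mathlib

section
/- Let P be a finite p-group with a chain of subgroups 1 = P₀ ≤ P₁ ≤ ⋯ ≤ P_k = P, all normal in P. Let Γ ≤ Aut(P) be a subgroup of automorphisms normalizing each P_i. If α ∈ Γ satisfies x⁻¹α(x) ∈ P_{i-1} for each 1 ≤ i ≤ k and each x ∈ P_i, then α lies in O_p(Γ), the largest normal p-subgroup of Γ. -/
/-!
An automorphism stabilizing the chain acts on each `P_{i+1}` by `x ↦ x c` with `c ∈ P_i`
fixed once `P_i` is fixed pointwise, so its `n`-th power is `x ↦ x cⁿ`. For `n` the order of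
the automorphism, `cⁿ = 1` in the `p`-group `P`; hence an automorphism of order prime to `p`
fixes every `P_i` pointwise and is trivial. Thus the automorphisms preserving and stabilizing
the chain form a `p`-group, and it is normalized by `Γ` because `Γ` preserves every `P_i`.
-/

open Pointwise MulAction

theorem IsPGroup.of_coprime_orderOf_eq_one {p : ℕ} [hp : Fact p.Prime] {G : Type*} [Group G]
    [Finite G] (h : ∀ g : G, (orderOf g).Coprime p → g = 1) : IsPGroup p G := by
  rw [isPGroup_iff_primeFactors_card_subset hp.out.ne_zero]
  intro q hq
  have hq' : q.Prime := Nat.prime_of_mem_primeFactors hq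
  have : Fact q.Prime := ⟨hq'⟩
  obtain ⟨g, hg⟩ := exists_prime_orderOf_dvd_card' q (Nat.dvd_of_mem_primeFactors hq)
  rw [hp.out.primeFactors, Finset.mem_singleton]
  by_contra hqp
  rw [h g (hg ▸ (Nat.coprime_primes hq' hp.out).2 hqp), orderOf_one] at hg
  exact hq'.ne_one hg.symm

namespace MulAut

variable {P : Type*} [Group P]

theorem mem_stabilizer_iff_map_eq {H : Subgroup P} {β : MulAut P} :
    β ∈ stabilizer (MulAut P) H ↔ H.map β.toMonoidHom = H :=
  mem_stabilizer_iff

theorem apply_mem_iff_of_mem_stabilizer {H : Subgroup P} {β : MulAut P}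
    (hβ : β ∈ stabilizer (MulAut P) H) {x : P} : β x ∈ H ↔ x ∈ H := by
  conv_lhs => rw [← mem_stabilizer_iff.mp hβ]
  exact Subgroup.smul_mem_pointwise_smul_iff

theorem pow_apply_eq_mul_pow {β : MulAut P} {x c : P} (hc : β c = c) (hx : β x = x * c) :
    ∀ n : ℕ, (β ^ n) x = x * c ^ n
  | 0 => by simp
  | n + 1 => by
    rw [pow_succ', mul_apply, pow_apply_eq_mul_pow hc hx n, map_mul, hx, map_pow, hc, mul_assoc,
      ← pow_succ']

variable {k : ℕ}

def chainStabilizer (C : Fin (k + 1) → Subgroup P) : Subgroup (MulAut P) where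
  carrier := {β | β ∈ ⨅ i, stabilizer (MulAut P) (C i) ∧
    ∀ i : Fin k, ∀ x ∈ C i.succ, x⁻¹ * β x ∈ C i.castSucc}
  one_mem' := ⟨one_mem _, fun i x _ => by simp⟩
  mul_mem' := by
    rintro β γ ⟨hβ, hβC⟩ ⟨hγ, hγC⟩
    refine ⟨mul_mem hβ hγ, fun i x hx => ?_⟩
    have hγx : γ x ∈ C i.succ :=
      (apply_mem_iff_of_mem_stabilizer (Subgroup.mem_iInf.1 hγ _)).2 hx
    have h : x⁻¹ * (β * γ) x = (x⁻¹ * γ x) * ((γ x)⁻¹ * β (γ x)) := by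
      rw [mul_apply]; group
    rw [h]
    exact mul_mem (hγC i x hx) (hβC i _ hγx)
  inv_mem' := by
    rintro β ⟨hβ, hβC⟩
    refine ⟨inv_mem hβ, fun i x hx => ?_⟩
    have hy : β⁻¹ x ∈ C i.succ :=
      (apply_mem_iff_of_mem_stabilizer (Subgroup.mem_iInf.1 (inv_mem hβ) _)).2 hx
    have h : x⁻¹ * β⁻¹ x = ((β⁻¹ x)⁻¹ * β (β⁻¹ x))⁻¹ := by
      rw [apply_inv_self]; group
    rw [h]
    exact inv_mem (hβC i _ hy)

variable {C : Fin (k + 1) → Subgroup P}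

theorem conj_mem_chainStabilizer {γ β : MulAut P} (hγ : γ ∈ ⨅ i, stabilizer (MulAut P) (C i))
    (hβ : β ∈ chainStabilizer C) : γ * β * γ⁻¹ ∈ chainStabilizer C := by
  obtain ⟨hβ, hβC⟩ := hβ
  refine ⟨mul_mem (mul_mem hγ hβ) (inv_mem hγ), fun i x hx => ?_⟩
  have hy : γ⁻¹ x ∈ C i.succ :=
    (apply_mem_iff_of_mem_stabilizer (Subgroup.mem_iInf.1 (inv_mem hγ) _)).2 hx
  have h : x⁻¹ * (γ * β * γ⁻¹) x = γ ((γ⁻¹ x)⁻¹ * β (γ⁻¹ x)) := by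
    simp only [mul_apply, map_mul, map_inv, apply_inv_self]
  rw [h]
  exact (apply_mem_iff_of_mem_stabilizer (Subgroup.mem_iInf.1 hγ _)).2 (hβC i _ hy)

theorem eq_one_of_mem_chainStabilizer_of_coprime {p : ℕ} [Finite P] (hP : IsPGroup p P)
    (hC0 : C 0 = ⊥) (hCk : C (Fin.last k) = ⊤) {β : MulAut P} (hβ : β ∈ chainStabilizer C)
    (hcop : (orderOf β).Coprime p) : β = 1 := by
  have hfix : ∀ j, ∀ x ∈ C j, β x = x := by
    intro j
    induction j using Fin.induction with
    | zero =>
      intro x hx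
      rw [hC0, Subgroup.mem_bot] at hx
      rw [hx, map_one]
    | succ i ih =>
      intro x hx
      set c := x⁻¹ * β x
      have hβx : β x = x * c := by simp [c]
      have hc : c ^ orderOf β = 1 := by
        have h := pow_apply_eq_mul_pow (ih c (hβ.2 i x hx)) hβx (orderOf β)
        rwa [pow_orderOf_eq_one, one_apply, left_eq_mul] at h
      have hc1 : c = 1 :=
        (hP.powEquiv hcop.symm).injective (by simp only [IsPGroup.powEquiv_apply, hc, one_pow])
      rw [hβx, hc1, mul_one]
  ext x
  exact hfix (Fin.last k) x (hCk ▸ Subgroup.mem_top x)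

theorem isPGroup_chainStabilizer {p : ℕ} [Fact p.Prime] [Finite P] (hP : IsPGroup p P)
    (hC0 : C 0 = ⊥) (hCk : C (Fin.last k) = ⊤) : IsPGroup p (chainStabilizer C) := by
  have : Finite (MulAut P) := Finite.of_injective _ DFunLike.coe_injective
  refine IsPGroup.of_coprime_orderOf_eq_one fun β hβ => Subtype.ext ?_
  exact eq_one_of_mem_chainStabilizer_of_coprime hP hC0 hCk β.2
    (Subgroup.orderOf_coe β ▸ hβ)

end MulAut

open MulAut in
theorem mem_pCore_of_stabilizes_chain_general {p : ℕ} [Fact p.Prime]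
    {P : Type*} [Group P] [Finite P] (hP : IsPGroup p P)
    {k : ℕ} (C : Fin (k + 1) → Subgroup P)
    (hC0 : C 0 = ⊥) (hCk : C (Fin.last k) = ⊤)
    (Γ : Subgroup (MulAut P))
    (hΓ : ∀ α ∈ Γ, ∀ i, (C i).map (α : MulAut P).toMonoidHom = C i)
    (α : MulAut P) (hα : α ∈ Γ)
    (hact : ∀ i : Fin k, ∀ x ∈ C i.succ, x⁻¹ * α x ∈ C i.castSucc) :
    ∃ N : Subgroup (MulAut P), N ≤ Γ ∧ IsPGroup p N ∧
      (∀ γ ∈ Γ, ∀ n ∈ N, γ * n * γ⁻¹ ∈ N) ∧ α ∈ N := by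
  have hΓC : Γ ≤ ⨅ i, stabilizer (MulAut P) (C i) := fun γ hγ =>
    Subgroup.mem_iInf.2 fun i => mem_stabilizer_iff_map_eq.2 (hΓ γ hγ i)
  refine ⟨chainStabilizer C ⊓ Γ, inf_le_right, (isPGroup_chainStabilizer hP hC0 hCk).to_inf_left,
    fun γ hγ n hn => ⟨conj_mem_chainStabilizer (hΓC hγ) hn.1,
      Γ.mul_mem (Γ.mul_mem hγ hn.2) (Γ.inv_mem hγ)⟩, ⟨hΓC hα, hact⟩, hα⟩

/-- Let `P` be a finite `p`-group with a chain of subgroups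
`1 = P₀ ≤ P₁ ≤ ⋯ ≤ P_k = P`, all normal in `P`, and let `Γ ≤ Aut(P)` normalize each
`P_i`.  If `α ∈ Γ` satisfies `x⁻¹ • α(x) ∈ P_{i-1}` for all `1 ≤ i ≤ k` and `x ∈ P_i`,
then `α` belongs to `O_p(Γ)`;  equivalently (since `O_p(Γ)` is the largest normal
`p`-subgroup of `Γ`), `α` lies in some normal `p`-subgroup of `Γ`. -/
theorem mem_pCore_of_stabilizes_chain {p : ℕ} [Fact p.Prime]
    {P : Type*} [Group P] [Finite P] (hP : IsPGroup p P)
    {k : ℕ} (C : Fin (k + 1) → Subgroup P)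
    (hC0 : C 0 = ⊥) (hCk : C (Fin.last k) = ⊤)
    (hmono : Monotone C) (hnormal : ∀ i, (C i).Normal)
    (Γ : Subgroup (MulAut P))
    (hΓ : ∀ α ∈ Γ, ∀ i, (C i).map (α : MulAut P).toMonoidHom = C i)
    (α : MulAut P) (hα : α ∈ Γ)
    (hact : ∀ i : Fin k, ∀ x ∈ C i.succ, x⁻¹ * α x ∈ C i.castSucc) :
    ∃ N : Subgroup (MulAut P), N ≤ Γ ∧ IsPGroup p N ∧
      (∀ γ ∈ Γ, ∀ n ∈ N, γ * n * γ⁻¹ ∈ N) ∧ α ∈ N :=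
  mem_pCore_of_stabilizes_chain_general hP C hC0 hCk Γ hΓ α hα hact
end

section
/- Let G be a finite group acting on a finite set {1,…,k}, let U be a Sylow p-subgroup of G, and let J ⊆ {1,…,k} be such that |Stab_U(σ·J)| ≤ |Stab_U(J)| for all σ ∈ G (where Stab_U(J) = {u ∈ U : u·J = J} for the induced action on subsets). Then Stab_U(J) is a Sylow p-subgroup of Stab_G(J). -/
/-!
A `p`-subgroup `R` of `Stab_G(J)` lies in a Sylow subgroup `Q = σ⁻¹Uσ` of `G`, and conjugating by
`σ` gives `|R| ≤ |Q ∩ Stab_G(J)| = |U ∩ Stab_G(σ•J)| ≤ |U ∩ Stab_G(J)|`; so if `R` contains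
`U ∩ Stab_G(J)` the two are equal.
-/

open Pointwise

theorem MulAction.stabilizer_smul_eq_conj_smul {G α : Type*} [Group G] [MulAction G α]
    (g : G) (a : α) : stabilizer G (g • a) = MulAut.conj g • stabilizer G a :=
  stabilizer_smul_eq_stabilizer_map_conj g a

theorem Subgroup.card_smul_inf {α G : Type*} [Group α] [Group G] [MulDistribMulAction α G]
    (a : α) (H K : Subgroup G) : Nat.card ↥(a • H ⊓ K) = Nat.card ↥(H ⊓ a⁻¹ • K) := by
  rw [← smul_inv_smul a K, ← smul_inf, inv_smul_smul]
  exact (Nat.card_congr (equivSMul a _).toEquiv).symm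

namespace Sylow

variable {p : ℕ} {G : Type*} [Group G] [Finite G]

theorem card_inf_le_of_forall_card_inf_conj_smul_le [Fact p.Prime] {U : Sylow p G} {S : Subgroup G}
    (hmax : ∀ g : G, Nat.card ↥((U : Subgroup G) ⊓ MulAut.conj g • S) ≤
      Nat.card ↥((U : Subgroup G) ⊓ S))
    (Q : Sylow p G) : Nat.card ↥((Q : Subgroup G) ⊓ S) ≤ Nat.card ↥((U : Subgroup G) ⊓ S) := by
  obtain ⟨g, rfl⟩ := MulAction.exists_smul_eq G U Q
  rw [coe_subgroup_smul, Subgroup.card_smul_inf, ← map_inv]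
  exact hmax g⁻¹

theorem eq_inf_of_forall_card_inf_le {U : Sylow p G} {S R : Subgroup G}
    (hmax : ∀ Q : Sylow p G, Nat.card ↥((Q : Subgroup G) ⊓ S) ≤
      Nat.card ↥((U : Subgroup G) ⊓ S))
    (hRS : R ≤ S) (hR : IsPGroup p R) (hUR : (U : Subgroup G) ⊓ S ≤ R) :
    R = (U : Subgroup G) ⊓ S := by
  obtain ⟨Q, hRQ⟩ := hR.exists_le_sylow
  have hcard : Nat.card R ≤ Nat.card ↥((U : Subgroup G) ⊓ S) :=
    (Subgroup.card_le_of_le (le_inf hRQ hRS)).trans (hmax Q)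
  exact (Subgroup.eq_of_le_of_card_ge hUR hcard).symm

end Sylow

/-- Let `G` be a finite group acting on `{1,…,k}`, `U` a Sylow
`p`-subgroup of `G`, and `J ⊆ {1,…,k}` such that `|Stab_U(σ•J)| ≤ |Stab_U(J)|` for
all `σ ∈ G`.  Then `Stab_U(J)` is a Sylow `p`-subgroup of `Stab_G(J)`. -/
theorem stabilizer_sylow_of_maximal {p : ℕ} [Fact p.Prime]
    {G : Type*} [Group G] [Finite G] {k : ℕ} [MulAction G (Fin k)]
    (U : Sylow p G) (J : Set (Fin k))
    (hmax : ∀ σ : G,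
      Nat.card ↥((U : Subgroup G) ⊓ MulAction.stabilizer G (σ • J)) ≤
        Nat.card ↥((U : Subgroup G) ⊓ MulAction.stabilizer G J)) :
    ((U : Subgroup G) ⊓ MulAction.stabilizer G J ≤ MulAction.stabilizer G J) ∧
    IsPGroup p ↥((U : Subgroup G) ⊓ MulAction.stabilizer G J) ∧
    ∀ R : Subgroup G, R ≤ MulAction.stabilizer G J → IsPGroup p R →
      (U : Subgroup G) ⊓ MulAction.stabilizer G J ≤ R →
      R = (U : Subgroup G) ⊓ MulAction.stabilizer G J := by
  have hconj (σ : G) := MulAction.stabilizer_smul_eq_conj_smul σ J ▸ hmax σ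
  exact ⟨inf_le_right, U.2.to_inf_left, fun R =>
    Sylow.eq_inf_of_forall_card_inf_le (Sylow.card_inf_le_of_forall_card_inf_conj_smul_le hconj)⟩
end

section
/- Let S be a finite p-group and T₁, …, T_k ≤ S pairwise elementwise-commuting subgroups with product T = T₁⋯T_k, and suppose Z ≤ Z(T) is such that T/Z = ∏(T_iZ/Z) is an internal direct product with each factor nontrivial. Let Y ≤ T with Y ≥ Z and Y/Z = Z(T/Z). Then Y ∩ T_i is not contained in Z for each i, and for every P ≤ T with Y ≰ P, there exists x ∈ N_Y(P) \ P such that [x, P] ≤ Z ∩ P and [x, Z ∩ P] = 1. -/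
/-!
Modulo `Z`, each `T i` is a nontrivial subgroup of the `p`-group `T`, normal because the other
factors centralize it, so it meets the centre of `T / Z` nontrivially; a lift of such a central
element lies in `(Y ⊓ T i) \ Z`.
For the second claim, `Y` is normal in `T`, so `Y ⊔ P = Y * P` is a `p`-group in which `P` is
proper; by the normalizer condition some `y * q` with `y ∈ Y`, `q ∈ P` normalizes `P` without
lying in it, and then so does `y`. Its commutators with `P` lie in `Z` because `y ∈ Y`, and in `P`
because `y` normalizes `P`.
-/

open Subgroup

theorem Subgroup.le_normalizer_of_forall_commute {G : Type*} [Group G] {H K : Subgroup G}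
    (h : ∀ x ∈ H, ∀ y ∈ K, Commute x y) : H ≤ normalizer K :=
  le_normalizer_iff.2 fun x hx y hy => by rw [(h x hx y hy).eq, mul_inv_cancel_right]; exact hy

theorem Subgroup.le_normalizer_of_commutator_mem {G : Type*} [Group G] {Z Y K : Subgroup G}
    (hZY : Z ≤ Y) (h : ∀ y ∈ Y, ∀ t ∈ K, y * t * y⁻¹ * t⁻¹ ∈ Z) : K ≤ normalizer Y :=
  le_normalizer_iff.2 fun t ht y hy => by
    have hconj : t * y * t⁻¹ = (y * t * y⁻¹ * t⁻¹)⁻¹ * y := by group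
    rw [hconj]
    exact mul_mem (hZY (inv_mem (h y hy t ht))) hy

theorem Subgroup.iSup_le_normalizer_of_pairwise_commute {G ι : Type*} [Group G]
    {T : ι → Subgroup G} (hcomm : Pairwise fun i j => ∀ x y : G, x ∈ T i → y ∈ T j → Commute x y)
    (i : ι) : ⨆ j, T j ≤ normalizer (T i) :=
  iSup_le fun j => by
    by_cases hji : j = i
    · exact hji ▸ le_normalizer
    · exact le_normalizer_of_forall_commute fun x hx y hy => hcomm hji x y hx hy

theorem IsPGroup.exists_ne_one_mem_center_of_normal {p : ℕ} [Fact p.Prime] {G : Type*} [Group G]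
    [Finite G] (hG : IsPGroup p G) (N : Subgroup G) [N.Normal] (hN : N ≠ ⊥) :
    ∃ g ∈ N, g ∈ center G ∧ g ≠ 1 := by
  have hpN : p ∣ Nat.card N := by
    have : Nontrivial N := (nontrivial_iff_ne_bot N).2 hN
    obtain ⟨n, hn, hcard⟩ := (hG.to_subgroup N).nontrivial_iff_card.1 this
    exact hcard ▸ dvd_pow_self p hn.ne'
  -- a fixed point of the conjugation action on `N` other than `1` is central
  obtain ⟨b, hb, hb1⟩ :=
    (hG.of_equiv ConjAct.toConjAct).exists_fixed_point_of_prime_dvd_card_of_fixed_point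
      N hpN (a := 1) fun g => smul_one g
  refine ⟨b, b.2, mem_center_iff.2 fun g => ?_, fun h => hb1 (Subtype.ext h.symm)⟩
  have hconj := congrArg Subtype.val (hb (ConjAct.toConjAct g))
  rw [ConjAct.Subgroup.val_conj_smul, ConjAct.smul_def, ConjAct.ofConjAct_toConjAct] at hconj
  exact mul_inv_eq_iff_eq_mul.1 hconj

theorem IsPGroup.exists_mem_notMem_commutator_mem {p : ℕ} [Fact p.Prime] {G : Type*} [Group G]
    [Finite G] (hG : IsPGroup p G) {N H : Subgroup G} [N.Normal] [H.Normal] (hHN : ¬ H ≤ N) :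
    ∃ h ∈ H, h ∉ N ∧ ∀ g, h * g * h⁻¹ * g⁻¹ ∈ N := by
  have : (H.map (QuotientGroup.mk' N)).Normal :=
    Normal.map inferInstance _ (QuotientGroup.mk'_surjective N)
  have hne : H.map (QuotientGroup.mk' N) ≠ ⊥ := by
    rwa [Ne, Subgroup.map_eq_bot_iff, QuotientGroup.ker_mk']
  obtain ⟨_, ⟨h, hh, rfl⟩, hcen, hne1⟩ :=
    (hG.to_quotient N).exists_ne_one_mem_center_of_normal _ hne
  refine ⟨h, hh, fun hN => hne1 ((QuotientGroup.eq_one_iff h).2 hN), fun g => ?_⟩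
  rw [← QuotientGroup.eq_one_iff, QuotientGroup.mk_mul, QuotientGroup.mk_mul,
    QuotientGroup.mk_mul, QuotientGroup.mk_inv, QuotientGroup.mk_inv, mul_inv_eq_one,
    mul_inv_eq_iff_eq_mul]
  exact (mem_center_iff.1 hcen g).symm

theorem IsPGroup.exists_mem_notMem_commutator_mem_of_le {p : ℕ} [Fact p.Prime] {G : Type*}
    [Group G] [Finite G] (hG : IsPGroup p G) {K N H : Subgroup G} (hHK : H ≤ K)
    (hKN : K ≤ normalizer N) (hKH : K ≤ normalizer H) (hHN : ¬ H ≤ N) :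
    ∃ h ∈ H, h ∉ N ∧ ∀ g ∈ K, h * g * h⁻¹ * g⁻¹ ∈ N := by
  have := normal_subgroupOf_of_le_normalizer hKN
  have := normal_subgroupOf_of_le_normalizer hKH
  have hHN' : ¬ H.subgroupOf K ≤ N.subgroupOf K := by
    obtain ⟨h, hh, hhN⟩ := SetLike.not_le_iff_exists.1 hHN
    exact fun hle => hhN (mem_subgroupOf.1 (hle (mem_subgroupOf.2 hh : ⟨h, hHK hh⟩ ∈ _)))
  obtain ⟨h, hh, hhN, hcomm⟩ := (hG.to_subgroup K).exists_mem_notMem_commutator_mem hHN'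
  exact ⟨h, hh, fun h' => hhN (mem_subgroupOf.2 h'),
    fun g hg => mem_subgroupOf.1 (hcomm ⟨g, hg⟩)⟩

theorem Subgroup.exists_mem_normalizer_notMem_of_not_le {G : Type*} [Group G]
    {Y P : Subgroup G} [Group.IsNilpotent ↥(Y ⊔ P)] (hPY : P ≤ normalizer Y) (hYP : ¬ Y ≤ P) :
    ∃ y ∈ Y, y ∈ normalizer P ∧ y ∉ P := by
  have hlt : P.subgroupOf (Y ⊔ P) < ⊤ := by
    rw [lt_top_iff_ne_top, Ne, subgroupOf_eq_top]
    exact fun h => hYP (le_sup_left.trans h)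
  obtain ⟨x, hxN, hxP⟩ := SetLike.exists_of_lt (Group.normalizerCondition_of_isNilpotent _ hlt)
  rw [← subgroupOf_normalizer_eq le_sup_right, mem_subgroupOf] at hxN
  rw [mem_subgroupOf] at hxP
  have hx : (x : G) ∈ (↑(Y ⊔ P) : Set G) := x.2
  rw [coe_mul_of_right_le_normalizer_left Y P hPY] at hx
  obtain ⟨y, hy, q, hq, hyq : y * q = x⟩ := hx
  refine ⟨y, hy, ?_, fun hyP => hxP (hyq ▸ mul_mem hyP hq)⟩
  rw [← mul_inv_cancel_right y q, hyq]
  exact mul_mem hxN (inv_mem (le_normalizer hq))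

theorem center_preimage_properties_general {p : ℕ} [Fact p.Prime]
    {S : Type*} [Group S] [Finite S] (hS : IsPGroup p S)
    {k : ℕ} (T : Fin k → Subgroup S)
    (hcomm : Pairwise fun i j : Fin k => ∀ x y : S, x ∈ T i → y ∈ T j → Commute x y)
    (TT : Subgroup S) (hTT : TT = ⨆ i, T i)
    (Z : Subgroup S)
    (hZcentral : ∀ z ∈ Z, ∀ t ∈ TT, Commute z t)
    (hnontriv : ∀ i, ¬ T i ≤ Z)
    (Y : Subgroup S) (hZY : Z ≤ Y)
    (hY : ∀ y : S, y ∈ Y ↔ y ∈ TT ∧ ∀ t ∈ TT, y * t * y⁻¹ * t⁻¹ ∈ Z) :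
    (∀ i, ¬ Y ⊓ T i ≤ Z) ∧
    ∀ P : Subgroup S, P ≤ TT → ¬ Y ≤ P →
      ∃ x, x ∈ Y ∧ x ∈ Subgroup.normalizer (P : Set S) ∧ x ∉ P ∧
        (∀ g ∈ P, x * g * x⁻¹ * g⁻¹ ∈ Z ⊓ P) ∧
        ∀ z ∈ Z ⊓ P, Commute x z := by
  subst hTT
  have hZnormal : ⨆ i, T i ≤ normalizer Z :=
    le_normalizer_of_forall_commute fun t ht z hz => (hZcentral z hz t ht).symm
  refine ⟨fun i hle => ?_, fun P hPT hYP => ?_⟩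
  · obtain ⟨u, hu, huZ, hucomm⟩ := hS.exists_mem_notMem_commutator_mem_of_le (le_iSup T i)
      hZnormal (iSup_le_normalizer_of_pairwise_commute hcomm i) (hnontriv i)
    exact huZ (hle ⟨(hY u).2 ⟨le_iSup T i hu, hucomm⟩, hu⟩)
  · have : Group.IsNilpotent ↥(Y ⊔ P) := (hS.to_subgroup _).isNilpotent
    have hYnormal : P ≤ normalizer Y :=
      hPT.trans (le_normalizer_of_commutator_mem hZY fun y hy => ((hY y).1 hy).2)
    obtain ⟨x, hxY, hxN, hxP⟩ := exists_mem_normalizer_notMem_of_not_le hYnormal hYP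
    obtain ⟨hxT, hxcomm⟩ := (hY x).1 hxY
    exact ⟨x, hxY, hxN, hxP,
      fun g hg => ⟨hxcomm g (hPT hg), mul_mem ((mem_normalizer_iff.1 hxN g).1 hg) (P.inv_mem hg)⟩,
      fun z hz => (hZcentral z hz.1 x hxT).symm⟩

/-- Let `T₁,…,T_k` be pairwise elementwise-commuting subgroups of a
finite `p`-group `S` with product `T`, and let `Z ≤ Z(T)` be such that
`T/Z = ∏ (T_iZ/Z)` is an internal direct product (expressed by the membership
characterization of products in `Z`) with each factor nontrivial (`T_i ≰ Z`).
Let `Y ≤ T` contain `Z` with `Y/Z = Z(T/Z)`.  Then `Y ∩ T_i ≰ Z` for each `i`,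
and for every `P ≤ T` with `Y ≰ P` there is `x ∈ N_Y(P) \ P` with
`[x,P] ≤ Z ∩ P` and `[x, Z ∩ P] = 1`. -/
theorem center_preimage_properties {p : ℕ} [Fact p.Prime]
    {S : Type*} [Group S] [Finite S] (hS : IsPGroup p S)
    {k : ℕ} (T : Fin k → Subgroup S)
    (hcomm : Pairwise fun i j : Fin k => ∀ x y : S, x ∈ T i → y ∈ T j → Commute x y)
    (TT : Subgroup S) (hTT : TT = ⨆ i, T i)
    (Z : Subgroup S) (hZT : Z ≤ TT)
    (hZcentral : ∀ z ∈ Z, ∀ t ∈ TT, Commute z t)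
    (hker : ∀ t : Fin k → S, (∀ i, t i ∈ T i) →
      ((List.ofFn t).prod ∈ Z ↔ ∀ i, t i ∈ Z ⊓ T i))
    (hnontriv : ∀ i, ¬ T i ≤ Z)
    (Y : Subgroup S) (hYT : Y ≤ TT) (hZY : Z ≤ Y)
    (hY : ∀ y : S, y ∈ Y ↔ y ∈ TT ∧ ∀ t ∈ TT, y * t * y⁻¹ * t⁻¹ ∈ Z) :
    (∀ i, ¬ Y ⊓ T i ≤ Z) ∧
    ∀ P : Subgroup S, P ≤ TT → ¬ Y ≤ P →
      ∃ x, x ∈ Y ∧ x ∈ Subgroup.normalizer (P : Set S) ∧ x ∉ P ∧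
        (∀ g ∈ P, x * g * x⁻¹ * g⁻¹ ∈ Z ⊓ P) ∧
        ∀ z ∈ Z ⊓ P, Commute x z :=
  center_preimage_properties_general hS T hcomm TT hTT Z hZcentral hnontriv Y hZY hY
end
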